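/- For all A, B ≥ 1 there exists C = C(A,B) ≥ 0 such that the following holds: if G and H are graphs that are A-quasi-isometric and C(G) ≤ B, then C(H) ≤ C. In other words, having all minimal cutsets between pairs of vertices k-connected for some finite k is a quasi-isometry invariant, with quantitative control of the constants (this answers Question 2 of Babson–Benjamini). -/

import Mathlib

open MeasureTheory Set
open scoped ENNReal

namespace PercPaper

/-! ### The Bernoulli(p) product measure on `ι → Bool`

We realize the Bernoulli product measure as the pushforward of the uniform
measure on `[0,1)` under the standard digit-interleaving construction:
the binary digits of a uniform point of `[0,1)` are i.i.d. fair coins; by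
interleaving (via the pairing function `Nat.pair`) we extract countably many
independent uniform random variables, and thresholding each at `p` produces
i.i.d. Bernoulli(`p`) bits. -/

/-- The `k`-th binary digit of a real number `x ∈ [0,1)`. -/
noncomputable def digit (k : ℕ) (x : ℝ) : Bool :=
  decide (⌊x * 2 ^ (k + 1)⌋ % 2 = 1)

/-- The `i`-th of countably many independent uniforms extracted from a single
uniform `x ∈ [0,1)` by digit interleaving. -/
noncomputable def unif (i : ℕ) (x : ℝ) : ℝ :=
  ∑' k : ℕ, if digit (Nat.pair i k) x then ((2 : ℝ) ^ (k + 1))⁻¹ else 0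

/-- The coordinates of the Bernoulli(`p`) product: coordinate `i` is `true`
("open") iff the `i`-th extracted uniform is `< p`. -/
noncomputable def coords (ι : Type) [Countable ι] (p : ℝ) (x : ℝ) : ι → Bool :=
  letI : Encodable ι := Encodable.ofCountable ι
  fun i => decide (unif (Encodable.encode i) x < p)

/-- The Bernoulli(`p`) product measure on `ι → Bool`. -/
noncomputable def bernoulliProd (ι : Type) [Countable ι] (p : ℝ) :
    Measure (ι → Bool) :=
  Measure.map (coords ι p) (volume.restrict (Set.Ico (0 : ℝ) 1))

/-! ### Graphs: the class of graphs under consideration -/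

/-- A simple, nonempty, locally finite, connected graph.  (Such a graph is
automatically countable; we record countability as a field.) -/
structure SpaceGraph : Type 1 where
  V : Type
  G : SimpleGraph V
  connected : G.Connected
  locallyFinite : ∀ v : V, (G.neighborSet v).Finite
  countableV : Countable V

instance (Γ : SpaceGraph) : Countable Γ.V := Γ.countableV

/-! ### Combinatorial notions on plain simple graphs -/

/-- `u` and `v` are `k`-adjacent: `1 ≤ d_G(u,v) ≤ k`. -/
def kAdj {V : Type} (G : SimpleGraph V) (k : ℕ) (u v : V) : Prop :=
  1 ≤ G.dist u v ∧ G.dist u v ≤ k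

/-- A set of vertices is `k`-connected if it is connected under `k`-adjacency. -/
def kConnectedSet {V : Type} (G : SimpleGraph V) (k : ℕ) (A : Set V) : Prop :=
  ∀ x ∈ A, ∀ y ∈ A,
    Relation.ReflTransGen (fun a b => a ∈ A ∧ b ∈ A ∧ kAdj G k a b) x y

/-- Two distinct edges are `k`-adjacent if some endpoint of one lies at
distance at most `k` from some endpoint of the other. -/
def edgeKAdj {V : Type} (G : SimpleGraph V) (k : ℕ) (e f : Sym2 V) : Prop :=
  e ≠ f ∧ ∃ x ∈ e, ∃ y ∈ f, G.dist x y ≤ k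

/-- A set of edges is `k`-connected if it is connected under `k`-adjacency. -/
def edgeKConnectedSet {V : Type} (G : SimpleGraph V) (k : ℕ) (A : Set (Sym2 V)) : Prop :=
  ∀ e ∈ A, ∀ f ∈ A,
    Relation.ReflTransGen (fun a b => a ∈ A ∧ b ∈ A ∧ edgeKAdj G k a b) e f

/-- `A` is a cutset between `u` and `v`: every walk from `u` to `v` meets `A`. -/
def IsCutset {V : Type} (G : SimpleGraph V) (A : Set V) (u v : V) : Prop :=
  ∀ w : G.Walk u v, ∃ x ∈ w.support, x ∈ A

/-- `A` is a minimal cutset between `u` and `v`. -/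
def IsMinCutset {V : Type} (G : SimpleGraph V) (A : Set V) (u v : V) : Prop :=
  IsCutset G A u v ∧ ∀ B : Set V, B ⊂ A → ¬IsCutset G B u v

/-- `C(G) ≤ k`: every minimal cutset between two vertices is `k`-connected. -/
def cutConnLe {V : Type} (G : SimpleGraph V) (k : ℕ) : Prop :=
  ∀ u v : V, ∀ A : Set V, IsMinCutset G A u v → kConnectedSet G k A

/-- `C*(G) ≤ k`: every finite minimal cutset between two vertices is `k`-connected. -/
def cutConnStarLe {V : Type} (G : SimpleGraph V) (k : ℕ) : Prop :=
  ∀ u v : V, ∀ A : Set V, A.Finite → IsMinCutset G A u v → kConnectedSet G k A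

/-- `A` is a bond-cutset between `u` and `v`: a set of edges of `G` such that
every walk from `u` to `v` uses an edge of `A`. -/
def IsBondCutset {V : Type} (G : SimpleGraph V) (A : Set (Sym2 V)) (u v : V) : Prop :=
  A ⊆ G.edgeSet ∧ ∀ w : G.Walk u v, ∃ e ∈ w.edges, e ∈ A

/-- `A` is a minimal bond-cutset between `u` and `v`. -/
def IsMinBondCutset {V : Type} (G : SimpleGraph V) (A : Set (Sym2 V)) (u v : V) : Prop :=
  IsBondCutset G A u v ∧ ∀ B : Set (Sym2 V), B ⊂ A → ¬IsBondCutset G B u v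

/-- `C_E(G) ≤ k`: every minimal bond-cutset between two vertices is `k`-connected. -/
def edgeCutConnLe {V : Type} (G : SimpleGraph V) (k : ℕ) : Prop :=
  ∀ u v : V, ∀ A : Set (Sym2 V), IsMinBondCutset G A u v → edgeKConnectedSet G k A

/-- `C*_E(G) ≤ k`: every finite minimal bond-cutset between two vertices is
`k`-connected. -/
def edgeCutConnStarLe {V : Type} (G : SimpleGraph V) (k : ℕ) : Prop :=
  ∀ u v : V, ∀ A : Set (Sym2 V), A.Finite → IsMinBondCutset G A u v →
    edgeKConnectedSet G k A

/-- Reachability inside a set `S` of vertices. -/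
def reachIn {V : Type} (G : SimpleGraph V) (S : Set V) : V → V → Prop :=
  Relation.ReflTransGen fun a b => a ∈ S ∧ b ∈ S ∧ G.Adj a b

/-- There is a path from `x` to `y` all of whose vertices lie in `S`. -/
def pathIn {V : Type} (G : SimpleGraph V) (S : Set V) (x y : V) : Prop :=
  x ∈ S ∧ reachIn G S x y

/-- The connected component of `u` of the subgraph induced on `S`. -/
def compIn {V : Type} (G : SimpleGraph V) (S : Set V) (u : V) : Set V :=
  {v | pathIn G S u v}

/-- `G` is one-ended: for every finite set `F` of vertices, the complement of
`F` has exactly one infinite connected component. -/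
def OneEnded {V : Type} (G : SimpleGraph V) : Prop :=
  ∀ F : Set V, F.Finite →
    ∃ u, u ∉ F ∧ (compIn G Fᶜ u).Infinite ∧
      ∀ v, v ∉ F → (compIn G Fᶜ v).Infinite → pathIn G Fᶜ u v

/-- The outer vertex boundary `∂_V A`: vertices not in `A` adjacent to `A`. -/
def vertexBoundary {V : Type} (G : SimpleGraph V) (A : Set V) : Set V :=
  {v | v ∉ A ∧ ∃ u ∈ A, G.Adj u v}

/-- A fibration: a 1-Lipschitz map along which every edge at the image of `x`
lifts to an edge at `x`. -/
def IsFibration {V W : Type} (GrL : SimpleGraph V) (GrS : SimpleGraph W)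
    (pr : V → W) : Prop :=
  (∀ x y : V, GrS.dist (pr x) (pr y) ≤ GrL.dist x y) ∧
  (∀ (x : V) (v : W), GrS.Adj (pr x) v → ∃ y : V, GrL.Adj x y ∧ pr y = v)

/-- `φ` is an `A`-quasi-isometry. -/
def IsQI {V W : Type} (A : ℝ) (G : SimpleGraph V) (H : SimpleGraph W)
    (φ : V → W) : Prop :=
  (∀ x y : V, (1 / A) * (G.dist x y : ℝ) - A ≤ (H.dist (φ x) (φ y) : ℝ) ∧
      (H.dist (φ x) (φ y) : ℝ) ≤ A * (G.dist x y : ℝ) + A) ∧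
  (∀ z : W, ∃ x : V, (H.dist z (φ x) : ℝ) ≤ A)

/-- `G` and `H` are `A`-quasi-isometric (with `A`-quasi-inverse maps). -/
def QuasiIsometric {V W : Type} (A : ℝ) (G : SimpleGraph V) (H : SimpleGraph W) : Prop :=
  ∃ (φ : V → W) (ψ : W → V), IsQI A G H φ ∧ IsQI A H G ψ ∧
    (∀ x : V, (G.dist (ψ (φ x)) x : ℝ) ≤ A) ∧
    (∀ z : W, (H.dist (φ (ψ z)) z : ℝ) ≤ A)

/-! ### Balls, transitivity, the class `𝔊`, and the local topology -/

/-- The ball of radius `r` around `o`. -/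
def ball (Γ : SpaceGraph) (o : Γ.V) (r : ℕ) : Set Γ.V := {v | Γ.G.dist o v ≤ r}

/-- The sphere of radius `r` around `o`. -/
def sphere (Γ : SpaceGraph) (o : Γ.V) (r : ℕ) : Set Γ.V := {v | Γ.G.dist o v = r}

/-- `Γ` is (vertex-)transitive. -/
def IsTransitive (Γ : SpaceGraph) : Prop :=
  ∀ u v : Γ.V, ∃ φ : Γ.G ≃g Γ.G, φ u = v

/-- Membership in the class `𝔊`: transitive, superlinear growth, and
polynomial growth. -/
def InPolyClass (Γ : SpaceGraph) : Prop :=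
  IsTransitive Γ ∧
  (∀ (o : Γ.V) (K : ℕ), ∃ R : ℕ, ∀ r : ℕ, R ≤ r → K * r ≤ (ball Γ o r).ncard) ∧
  (∃ C d : ℕ, ∀ (o : Γ.V) (r : ℕ), 1 ≤ r → (ball Γ o r).ncard ≤ C * r ^ d)

lemma self_mem_ball (Γ : SpaceGraph) (o : Γ.V) (r : ℕ) : o ∈ ball Γ o r := by
  simp [ball, SimpleGraph.dist_self]

/-- The rooted balls of radius `r` in `Γ` (around `o`) and `Δ` (around `o'`)
are isomorphic, by an isomorphism matching the roots. -/
def rootedBallIso (Γ Δ : SpaceGraph) (o : Γ.V) (o' : Δ.V) (r : ℕ) : Prop :=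
  ∃ φ : Γ.G.induce (ball Γ o r) ≃g Δ.G.induce (ball Δ o' r),
    φ ⟨o, self_mem_ball Γ o r⟩ = ⟨o', self_mem_ball Δ o' r⟩

/-- `R(Γ,Δ) ≥ r`: the `r`-balls of `Γ` and `Δ` are isomorphic as rooted graphs. -/
def RGe (Γ Δ : SpaceGraph) (r : ℕ) : Prop :=
  ∃ (o : Γ.V) (o' : Δ.V), rootedBallIso Γ Δ o o' r

/-! ### Bernoulli percolation -/

/-- The probability of the event `A` under Bernoulli(`p`) bond percolation on `Γ`.
(Configurations assign a state to every element of `Sym2 Γ.V`; only the states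
of actual edges matter for the events considered.) -/
noncomputable def prob (Γ : SpaceGraph) (p : ℝ) (A : Set (Sym2 Γ.V → Bool)) : ℝ :=
  (bernoulliProd (Sym2 Γ.V) p A).toReal

/-- The probability of the event `A`, as an extended nonnegative real. -/
noncomputable def probNN (Γ : SpaceGraph) (p : ℝ) (A : Set (Sym2 Γ.V → Bool)) : ℝ≥0∞ :=
  bernoulliProd (Sym2 Γ.V) p A

/-- `u` and `v` are adjacent and the edge between them is open in `ω`. -/
def openAdj (Γ : SpaceGraph) (ω : Sym2 Γ.V → Bool) (u v : Γ.V) : Prop :=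
  Γ.G.Adj u v ∧ ω s(u, v) = true

/-- `u` and `v` are connected by an open path in `ω`. -/
def Conn (Γ : SpaceGraph) (ω : Sym2 Γ.V → Bool) (u v : Γ.V) : Prop :=
  Relation.ReflTransGen (openAdj Γ ω) u v

/-- The (open) cluster of `u` in `ω`. -/
def cluster (Γ : SpaceGraph) (ω : Sym2 Γ.V → Bool) (u : Γ.V) : Set Γ.V :=
  {v | Conn Γ ω u v}

/-- `θ_Γ(p)` with root `o` (independent of `o` for transitive graphs). -/
noncomputable def theta (Γ : SpaceGraph) (o : Γ.V) (p : ℝ) : ℝ :=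
  prob Γ p {ω | (cluster Γ ω o).Infinite}

/-- The critical parameter `p_c(Γ)` (with root `o`). -/
noncomputable def pc (Γ : SpaceGraph) (o : Γ.V) : ℝ :=
  sInf ({1} ∪ {p : ℝ | p ∈ Set.Icc (0 : ℝ) 1 ∧ 0 < theta Γ o p})


/-! ### Good and bad vertices, interfaces -/

/-- Open connectivity using only vertices of `S`. -/
def ConnIn (Γ : SpaceGraph) (ω : Sym2 Γ.V → Bool) (S : Set Γ.V) (u v : Γ.V) : Prop :=
  Relation.ReflTransGen (fun a b => a ∈ S ∧ b ∈ S ∧ openAdj Γ ω a b) u v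

/-- The uniqueness event `U(m,n,x)`: at most one cluster of `ω` restricted to
`B(x,n)` intersects both `B(x,m)` and `S(x,n)`. -/
def UEvent (Γ : SpaceGraph) (ω : Sym2 Γ.V → Bool) (m n : ℕ) (x : Γ.V) : Prop :=
  ∀ a b a' b' : Γ.V, a ∈ ball Γ x m → b ∈ sphere Γ x n →
    a' ∈ ball Γ x m → b' ∈ sphere Γ x n →
    ConnIn Γ ω (ball Γ x n) a b → ConnIn Γ ω (ball Γ x n) a' b' →
    ConnIn Γ ω (ball Γ x n) a a'

/-- `x` is `N`-good in `ω`. -/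
def NGood (Γ : SpaceGraph) (ω : Sym2 Γ.V → Bool) (N : ℕ) (x : Γ.V) : Prop :=
  ∀ z : Γ.V, (z = x ∨ Γ.G.Adj x z) →
    (∃ a ∈ ball Γ z N, ∃ b ∈ sphere Γ z (10 * N), Conn Γ ω a b) ∧
      UEvent Γ ω (2 * N) (5 * N) z

/-- `x` is `N`-bad in `ω`. -/
def NBad (Γ : SpaceGraph) (ω : Sym2 Γ.V → Bool) (N : ℕ) (x : Γ.V) : Prop :=
  ¬NGood Γ ω N x

/-- `C_x^bad(N)`: the `t`-connected component of `x` within the `N`-bad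
vertices (empty if `x` is `N`-good). -/
def badComp (Γ : SpaceGraph) (ω : Sym2 Γ.V → Bool) (N t : ℕ) (x : Γ.V) : Set Γ.V :=
  {y | NBad Γ ω N x ∧
    Relation.ReflTransGen (fun a b => NBad Γ ω N a ∧ NBad Γ ω N b ∧ kAdj Γ.G t a b) x y}

/-- `C_o(N)`: the set of vertices within distance `N` of the cluster of `o`. -/
def clusterNbhd (Γ : SpaceGraph) (ω : Sym2 Γ.V → Bool) (o : Γ.V) (N : ℕ) : Set Γ.V :=
  {v | ∃ u ∈ cluster Γ ω o, Γ.G.dist v u ≤ N}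

/-- The exposed boundary `∂A`: vertices of `A` adjacent to an infinite
connected component of the complement of `A`. -/
def exposedBoundary (Γ : SpaceGraph) (A : Set Γ.V) : Set Γ.V :=
  {v | v ∈ A ∧ ∃ w, w ∉ A ∧ Γ.G.Adj v w ∧ (compIn Γ.G Aᶜ w).Infinite}

/-- An interface (relative to the root `o` and the connectivity constant `t`):
a finite `t`-connected set of vertices containing `o` or surrounding `o`. -/
def IsInterface (Γ : SpaceGraph) (o : Γ.V) (t : ℕ) (I : Finset Γ.V) : Prop :=
  kConnectedSet Γ.G t (↑I : Set Γ.V) ∧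
    (o ∈ I ∨ (o ∉ I ∧ (compIn Γ.G ((↑I : Set Γ.V))ᶜ o).Finite))

/-- The set of vertices within distance `r` of `I`. -/
def interfaceNbhd (Γ : SpaceGraph) (I : Finset Γ.V) (r : ℕ) : Set Γ.V :=
  {v | ∃ y ∈ I, Γ.G.dist v y ≤ r}

/-- The interface `I` occurs in `ω` at scale `N`: all its vertices are `N`-bad,
all vertices at distance between `1` and `t` from it are `N`-good, and the
closed edges with both endpoints within distance `5N` of `I` form a
bond-cutset between `o` and infinity. -/
def InterfaceOccurs (Γ : SpaceGraph) (o : Γ.V) (t N : ℕ) (ω : Sym2 Γ.V → Bool)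
    (I : Finset Γ.V) : Prop :=
  (∀ x ∈ I, NBad Γ ω N x) ∧
  (∀ x : Γ.V, x ∉ I → (∃ y ∈ I, Γ.G.dist x y ≤ t) → NGood Γ ω N x) ∧
  (∀ f : ℕ → Γ.V, f 0 = o → Function.Injective f →
    (∀ n : ℕ, Γ.G.Adj (f n) (f (n + 1))) →
    ∃ n : ℕ, ω s(f n, f (n + 1)) = false ∧
      f n ∈ interfaceNbhd Γ I (5 * N) ∧ f (n + 1) ∈ interfaceNbhd Γ I (5 * N))

/-- A multi-interface: a finite nonempty collection of pairwise disjoint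
interfaces. -/
def IsMultiInterface (Γ : SpaceGraph) (o : Γ.V) (t : ℕ)
    (M : Finset (Finset Γ.V)) : Prop :=
  M.Nonempty ∧ (∀ I ∈ M, IsInterface Γ o t I) ∧
    ∀ I ∈ M, ∀ J ∈ M, I ≠ J → Disjoint I J

/-- The size of a multi-interface. -/
def multiSize {α : Type} (M : Finset (Finset α)) : ℕ := ∑ I ∈ M, I.card

/-- The multi-interface `M` occurs in `ω` at scale `N`. -/
def MultiOccurs (Γ : SpaceGraph) (o : Γ.V) (t N : ℕ) (ω : Sym2 Γ.V → Bool)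
    (M : Finset (Finset Γ.V)) : Prop :=
  ∀ I ∈ M, InterfaceOccurs Γ o t N ω I

/-! ### Growth degree and dimension -/

/-- `Γ` has growth of degree at most `d`. -/
def growthLe (Γ : SpaceGraph) (d : ℕ) : Prop :=
  ∃ C : ℕ, ∀ (o : Γ.V) (r : ℕ), 1 ≤ r → (ball Γ o r).ncard ≤ C * r ^ d

/-- The dimension of a graph of polynomial growth: the least degree `d` of a
polynomial upper bound on the growth. -/
noncomputable def dimen (Γ : SpaceGraph) : ℕ := sInf {d | growthLe Γ d}

/-! ### Cayley graphs and products of cycle-graphs -/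

/-- The Cayley graph of a group `K` with respect to a (symmetrized) set `T`. -/
def cayley (K : Type) [Group K] (T : Set K) : SimpleGraph K where
  Adj g h := g ≠ h ∧ (g⁻¹ * h ∈ T ∨ h⁻¹ * g ∈ T)
  symm := ⟨by
    rintro g h ⟨hgh, hmem⟩
    exact ⟨hgh.symm, hmem.symm⟩⟩
  loopless := ⟨fun g h => h.1 rfl⟩

/-- A finitely generated group is one-ended if all of its Cayley graphs with
respect to finite generating sets are one-ended. -/
def GroupOneEnded (K : Type) [Group K] : Prop :=
  ∀ T : Set K, T.Finite → Subgroup.closure T = ⊤ → OneEnded (cayley K T)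

/-- The box product of a finite family of graphs. -/
def boxProd {m : ℕ} (Vf : Fin m → Type) (Gf : ∀ i, SimpleGraph (Vf i)) :
    SimpleGraph (∀ i, Vf i) where
  Adj a b := ∃ i, (Gf i).Adj (a i) (b i) ∧ ∀ j, j ≠ i → a j = b j
  symm := ⟨by
    rintro a b ⟨i, hadj, h⟩
    exact ⟨i, hadj.symm, fun j hj => (h j hj).symm⟩⟩
  loopless := ⟨by
    rintro a ⟨i, hadj, -⟩
    exact (Gf i).loopless.irrefl _ hadj⟩

/-- Membership in the class `𝔄`: products of finitely many cycle-graphs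
(connected graphs in which every vertex has degree 2), at least two of which
are infinite. -/
def InA (Γ : SpaceGraph) : Prop :=
  ∃ (m : ℕ) (Vf : Fin m → Type) (Gf : ∀ i, SimpleGraph (Vf i)),
    (∀ i, (Gf i).Connected) ∧
    (∀ (i : Fin m) (v : Vf i), ((Gf i).neighborSet v).ncard = 2) ∧
    (∃ i j : Fin m, i ≠ j ∧ Infinite (Vf i) ∧ Infinite (Vf j)) ∧
    Nonempty (Γ.G ≃g boxProd Vf Gf)

/-!
Let `P` be a minimal cutset of `H` that is not `k`-connected for a suitable large `k`, and split it
into the `k`-component `S₂` of one of its points and the rest `S₁`, which lies more than `k` away.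
Every point of `P` has neighbours on both sides of `P`; following the side of each endpoint from a
foot at `S₂` to a foot at `S₁`, and using the `k`-connectedness of `S₂`, one finds vertices `x`, `y`
separated by `P` but by neither coarse neighbourhood of `S₁` nor of `S₂` alone. On the other hand,
the pull-back of `P` to `G` contains a minimal cutset, which is `B`-connected, so it stays near the
image of only one of `S₁`, `S₂`; pushing it forward, that part coarsely separates `x` from `y`.
-/

end PercPaper

namespace SimpleGraph

variable {V W : Type*} {G : SimpleGraph V} {u v w : V}

theorem Walk.dist_add_dist_le_length (p : G.Walk u v) (hw : w ∈ p.support) :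
    G.dist u w + G.dist w v ≤ p.length := by
  classical
  rw [← congrArg Walk.length (p.take_spec hw), Walk.length_append]
  exact add_le_add (G.dist_le _) (G.dist_le _)

theorem Walk.exists_boundary_prefix {S : Set V} (p : G.Walk u v) (hu : u ∈ S)
    (h : ∃ w ∈ p.support, w ∉ S) :
    ∃ x y, G.Adj x y ∧ y ∉ S ∧ y ∈ p.support ∧
      ∃ q : G.Walk u x, (∀ w ∈ q.support, w ∈ S) ∧ q.support ⊆ p.support := by
  induction p with
  | nil =>
    obtain ⟨w, hw, hwS⟩ := h
    rw [Walk.support_nil, List.mem_singleton] at hw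
    exact absurd (hw ▸ hu) hwS
  | @cons u u' v hadj p ih =>
    by_cases hu' : u' ∈ S
    · obtain ⟨w, hw, hwS⟩ := h
      have hwp : w ∈ p.support := by
        rw [Walk.support_cons, List.mem_cons] at hw
        exact hw.resolve_left (by rintro rfl; exact hwS hu)
      obtain ⟨x, y, hxy, hyS, hyp, q, hqS, hqp⟩ := ih hu' ⟨w, hwp, hwS⟩
      refine ⟨x, y, hxy, hyS, by simp [hyp], Walk.cons hadj q, ?_, ?_⟩
      · simpa [Walk.support_cons] using And.intro hu hqS
      · simpa [Walk.support_cons] using List.cons_subset_cons u hqp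
    · exact ⟨u, u', hadj, hu', by simp, Walk.nil, by simp [hu], by simp⟩

theorem Connected.exists_walk_near_map {H : SimpleGraph W} (hG : G.Connected) {f : W → V}
    {k : ℕ} (hf : ∀ a b, H.Adj a b → G.dist (f a) (f b) ≤ k) {x y : W} (p : H.Walk x y) :
    ∃ q : G.Walk (f x) (f y), ∀ g ∈ q.support, ∃ w ∈ p.support, G.dist (f w) g ≤ k := by
  induction p with
  | nil => exact ⟨Walk.nil, fun g hg => ⟨_, Walk.start_mem_support _, by simp_all⟩⟩
  | @cons a b _ hab p ih =>
    obtain ⟨q, hq⟩ := ih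
    obtain ⟨r, hr⟩ := hG.exists_walk_length_eq_dist (f a) (f b)
    refine ⟨r.append q, fun g hg => ?_⟩
    rcases (Walk.mem_support_append_iff _ _).mp hg with hg | hg
    · have := r.dist_add_dist_le_length hg
      exact ⟨a, Walk.start_mem_support _, by have := hf a b hab; omega⟩
    · obtain ⟨w, hw, hwg⟩ := hq g hg
      exact ⟨w, by simp [hw], hwg⟩

end SimpleGraph

namespace PercPaper

open SimpleGraph

def thickening {V : Type} (G : SimpleGraph V) (r : ℕ) (S : Set V) : Set V :=
  {v | ∃ s ∈ S, G.dist v s ≤ r}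

section Thickening

variable {V : Type} {G : SimpleGraph V} {r r' k : ℕ} {S T : Set V} {x y : V}

theorem subset_thickening : S ⊆ thickening G r S :=
  fun s hs => ⟨s, hs, by simp⟩

theorem thickening_mono (h : r ≤ r') : thickening G r S ⊆ thickening G r' S :=
  fun _ ⟨s, hs, hd⟩ => ⟨s, hs, hd.trans h⟩

theorem thickening_union : thickening G r (S ∪ T) = thickening G r S ∪ thickening G r T := by
  ext v
  simp [thickening, or_and_right, exists_or]

theorem thickening_thickening_subset (hG : G.Connected) :
    thickening G r (thickening G r' S) ⊆ thickening G (r + r') S := by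
  rintro v ⟨w, ⟨s, hs, hws⟩, hvw⟩
  exact ⟨s, hs, (hG.dist_triangle (v := w)).trans (by omega)⟩

theorem mem_thickening_succ_of_adj (hG : G.Connected) (hxy : G.Adj x y)
    (hx : x ∈ thickening G r S) : y ∈ thickening G (r + 1) S := by
  obtain ⟨s, hs, hxs⟩ := hx
  have hyx : G.dist y x = 1 := dist_eq_one_iff_adj.mpr hxy.symm
  exact ⟨s, hs, (hG.dist_triangle (v := x)).trans (by omega)⟩

theorem lt_dist_of_mem_thickening (hG : G.Connected)
    (hST : ∀ s ∈ S, ∀ t ∈ T, r + k + r' < G.dist s t)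
    (hx : x ∈ thickening G r S) (hy : y ∈ thickening G r' T) : k < G.dist x y := by
  obtain ⟨s, hs, hxs⟩ := hx
  obtain ⟨t, ht, hyt⟩ := hy
  have h₁ : G.dist s t ≤ G.dist s x + G.dist x t := hG.dist_triangle
  have h₂ : G.dist x t ≤ G.dist x y + G.dist y t := hG.dist_triangle
  have := hST s hs t ht
  rw [dist_comm] at hxs
  omega

theorem exists_walk_support_subset_thickening (hG : G.Connected)
    (hx : x ∈ thickening G r S) :
    ∃ s ∈ S, ∃ p : G.Walk x s, ∀ w ∈ p.support, w ∈ thickening G r S := by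
  obtain ⟨s, hs, hxs⟩ := hx
  obtain ⟨p, hp⟩ := hG.exists_walk_length_eq_dist x s
  exact ⟨s, hs, p, fun w hw => ⟨s, hs, by have := p.dist_add_dist_le_length hw; omega⟩⟩

end Thickening

section KConnected

variable {V : Type} {G : SimpleGraph V} {k : ℕ} {A S T : Set V} {a b : V}

theorem kConnectedSet_singleton : kConnectedSet G k {a} := by
  rintro x rfl y rfl
  exact Relation.ReflTransGen.refl

theorem kConnectedSet.subset_or_subset (hA : kConnectedSet G k A) (hAST : A ⊆ S ∪ T)
    (hST : ∀ s ∈ S, ∀ t ∈ T, k < G.dist s t) : A ⊆ S ∨ A ⊆ T := by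
  refine or_iff_not_imp_left.mpr fun hAS y hyA => ?_
  obtain ⟨x, hxA, hxS⟩ := Set.not_subset.mp hAS
  induction hA x hxA y hyA with
  | refl => exact (hAST hxA).resolve_left hxS
  | tail _ hzy ih =>
    obtain ⟨hz, hy, -, hzy⟩ := hzy
    refine (hAST hy).resolve_left fun hyS => ?_
    have := hST _ hyS _ (ih hz)
    rw [dist_comm] at this
    omega

theorem kConnectedSet.exists_walk (hG : G.Connected) (hA : kConnectedSet G k A)
    (ha : a ∈ A) (hb : b ∈ A) :
    ∃ p : G.Walk a b, ∀ w ∈ p.support, w ∈ thickening G (k / 2) A := by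
  induction hA a ha b hb with
  | refl => exact ⟨Walk.nil, by simpa using subset_thickening ha⟩
  | @tail c d _ hcd ih =>
    obtain ⟨hc, hd, -, hcd⟩ := hcd
    obtain ⟨p, hp⟩ := ih hc
    obtain ⟨q, hq⟩ := hG.exists_walk_length_eq_dist c d
    refine ⟨p.append q, fun w hw => ?_⟩
    rcases (Walk.mem_support_append_iff _ _).mp hw with hw | hw
    · exact hp w hw
    · have := q.dist_add_dist_le_length hw
      by_cases hcw : G.dist c w ≤ k / 2
      · exact ⟨c, hc, by rw [dist_comm]; exact hcw⟩
      · exact ⟨d, hd, by omega⟩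

theorem exists_split_of_not_kConnectedSet (hG : G.Connected) (h : ¬kConnectedSet G k A) :
    ∃ S T, A = S ∪ T ∧ S.Nonempty ∧ T.Nonempty ∧
      (∀ s ∈ S, ∀ t ∈ T, k < G.dist s t) ∧ kConnectedSet G k T := by
  simp only [kConnectedSet, not_forall] at h
  obtain ⟨x, hx, y, hy, hxy⟩ := h
  set R := fun a b => a ∈ A ∧ b ∈ A ∧ kAdj G k a b
  set T := {w | w ∈ A ∧ Relation.ReflTransGen R x w}
  have hRT : ∀ w, Relation.ReflTransGen R x w →
      Relation.ReflTransGen (fun a b => a ∈ T ∧ b ∈ T ∧ kAdj G k a b) x w := by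
    intro w hw
    induction hw with
    | refl => exact .refl
    | tail hxc hcd ih => exact ih.tail ⟨⟨hcd.1, hxc⟩, ⟨hcd.2.1, hxc.tail hcd⟩, hcd.2.2⟩
  refine ⟨A \ T, T, (Set.sdiff_union_of_subset fun _ h => h.1).symm, ⟨y, hy, fun h => hxy h.2⟩,
    ⟨x, hx, .refl⟩, fun s hs t ht => ?_, fun a ha b hb => ?_⟩
  · by_contra! hst
    have hne : t ≠ s := fun h => hs.2 (h ▸ ht)
    have hpos := hG.pos_dist_of_ne hne
    rw [dist_comm] at hst
    exact hs.2 ⟨hs.1, ht.2.tail ⟨ht.1, hs.1, hpos, hst⟩⟩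
  · have : Std.Symm fun a b => a ∈ T ∧ b ∈ T ∧ kAdj G k a b :=
      ⟨fun a b ⟨ha, hb, hab⟩ => ⟨hb, ha, by simpa [kAdj, dist_comm] using hab⟩⟩
    exact (Std.Symm.symm _ _ (hRT a ha.2)).trans (hRT b hb.2)

end KConnected

section Cutsets

variable {V : Type} {G : SimpleGraph V} {P S T : Set V} {u v x y x' y' : V}

theorem IsCutset.symm (h : IsCutset G P u v) : IsCutset G P v u := fun p => by
  simpa using h p.reverse

theorem IsMinCutset.symm (h : IsMinCutset G P u v) : IsMinCutset G P v u :=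
  ⟨h.1.symm, fun S hS hc => h.2 S hS hc.symm⟩

theorem IsCutset.mono (h : IsCutset G S u v) (hST : S ⊆ T) : IsCutset G T u v := fun p =>
  let ⟨x, hx, hxS⟩ := h p
  ⟨x, hx, hST hxS⟩

theorem IsMinCutset.eq_singleton_left (h : IsMinCutset G P u v) (hu : u ∈ P) : P = {u} := by
  by_contra hne
  exact h.2 {u} ((Set.singleton_subset_iff.mpr hu).ssubset_of_ne (Ne.symm hne))
    fun p => ⟨u, p.start_mem_support, rfl⟩

theorem IsMinCutset.eq_singleton_right (h : IsMinCutset G P u v) (hv : v ∈ P) : P = {v} :=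
  h.symm.eq_singleton_left hv

theorem exists_isMinCutset_subset (h : IsCutset G S u v) : ∃ P ⊆ S, IsMinCutset G P u v := by
  classical
  have hchain : ∀ c ⊆ {P | IsCutset G P u v}, IsChain (· ⊆ ·) c → c.Nonempty →
      ∃ lb ∈ {P | IsCutset G P u v}, ∀ s ∈ c, lb ⊆ s := by
    intro c hc hchain hne
    refine ⟨⋂₀ c, fun p => ?_, fun s hs => Set.sInter_subset_of_mem hs⟩
    by_contra! hp
    -- the support of `p` is finite, so a single member of the chain already misses it
    have hdir : DirectedOn (fun i j : Set V => iᶜ ⊆ jᶜ) c := fun i hi j hj => by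
      rcases hchain.total hi hj with hij | hji
      · exact ⟨i, hi, subset_rfl, Set.compl_subset_compl.mpr hij⟩
      · exact ⟨j, hj, Set.compl_subset_compl.mpr hji, subset_rfl⟩
    obtain ⟨t, htc, ht⟩ := hdir.exists_mem_subset_of_finset_subset_biUnion hne
      (s := p.support.toFinset) fun w hw => by
        simpa using hp w (List.mem_toFinset.mp hw)
    obtain ⟨w, hw, hwt⟩ := hc htc p
    exact ht (by simpa using hw) hwt
  obtain ⟨P, hPS, hP⟩ := zorn_superset_nonempty _ hchain S h
  exact ⟨P, hPS, hP.prop, fun Q hQ hQc => hQ.ne (hP.eq_of_subset hQc hQ.subset)⟩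

theorem IsCutset.of_walks_avoiding (h : IsCutset G P u v) (p : G.Walk u x)
    (hp : ∀ w ∈ p.support, w ∉ P) (q : G.Walk v y) (hq : ∀ w ∈ q.support, w ∉ P) :
    IsCutset G P x y := fun r => by
  obtain ⟨w, hw, hwP⟩ := h (p.append (r.append q.reverse))
  simp only [Walk.mem_support_append_iff, Walk.support_reverse, List.mem_reverse] at hw
  rcases hw with hw | hw | hw
  · exact absurd hwP (hp w hw)
  · exact ⟨w, hw, hwP⟩
  · exact absurd hwP (hq w hw)

theorem IsMinCutset.exists_adj_walk_avoiding (h : IsMinCutset G P u v) (hu : u ∉ P)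
    {z : V} (hz : z ∈ P) : ∃ a, G.Adj a z ∧ ∃ p : G.Walk u a, ∀ w ∈ p.support, w ∉ P := by
  have hnc := h.2 (P \ {z}) (Set.sdiff_singleton_ssubset.mpr hz)
  simp only [IsCutset, not_forall, not_exists, not_and] at hnc
  obtain ⟨p, hp⟩ := hnc
  obtain ⟨a, b, hab, hbP, hbp, q, hqP, -⟩ :=
    p.exists_boundary_prefix (S := Pᶜ) hu (let ⟨w, hw, hwP⟩ := h.1 p; ⟨w, hw, not_not.mpr hwP⟩)
  have hbz : b = z := by
    by_contra hbz
    exact hp b hbp ⟨not_not.mp hbP, hbz⟩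
  exact ⟨a, hbz ▸ hab, q, hqP⟩

theorem IsCutset.thickening_of_dist_le (hG : G.Connected) {r : ℕ} (h : IsCutset G S x y)
    (hx : G.dist x x' ≤ r) (hy : G.dist y' y ≤ r) : IsCutset G (thickening G r S) x' y' := by
  intro p
  obtain ⟨px, hpx⟩ := hG.exists_walk_length_eq_dist x x'
  obtain ⟨py, hpy⟩ := hG.exists_walk_length_eq_dist y' y
  obtain ⟨s, hs, hsS⟩ := h (px.append (p.append py))
  simp only [Walk.mem_support_append_iff] at hs
  rcases hs with hs | hs | hs
  · have := px.dist_add_dist_le_length hs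
    exact ⟨x', p.start_mem_support, s, hsS, by rw [dist_comm]; omega⟩
  · exact ⟨s, hs, subset_thickening hsS⟩
  · have := py.dist_add_dist_le_length hs
    exact ⟨y', p.end_mem_support, s, hsS, by omega⟩

theorem IsCutset.comap {W : Type} {H : SimpleGraph W} (hG : G.Connected) {f : W → V} {k : ℕ}
    (hf : ∀ a b, H.Adj a b → G.dist (f a) (f b) ≤ k) {x y : W}
    (h : IsCutset G S (f x) (f y)) : IsCutset H (f ⁻¹' thickening G k S) x y := by
  intro p
  obtain ⟨q, hq⟩ := hG.exists_walk_near_map hf p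
  obtain ⟨g, hg, hgS⟩ := h q
  obtain ⟨w, hw, hwg⟩ := hq g hg
  exact ⟨w, hw, g, hgS, hwg⟩

end Cutsets

section Separation

variable {V : Type} {G : SimpleGraph V} {P S T : Set V} {u v : V} {r : ℕ}

/-- `x` is the vertex just before the first entry into the `r`-thickening of `S` of a walk, on
the side of `u`, from a foot of `y₀` to a foot of `x₀`. -/
theorem IsMinCutset.exists_escape (hG : G.Connected) (hP : IsMinCutset G P u v) (hu : u ∉ P)
    {x₀ y₀ : V} (hx₀P : x₀ ∈ P) (hx₀S : x₀ ∈ S) (hy₀P : y₀ ∈ P)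
    (hy₀S : y₀ ∉ thickening G (r + 1) S) (hr : 0 < r) :
    ∃ x, (∃ p : G.Walk u x, ∀ w ∈ p.support, w ∉ P) ∧ x ∈ thickening G (r + 1) S ∧
      ∃ a, G.Adj a y₀ ∧ ∃ q : G.Walk x a, ∀ w ∈ q.support, w ∉ thickening G r S := by
  obtain ⟨a₁, ha₁, p₁, hp₁⟩ := hP.exists_adj_walk_avoiding hu hy₀P
  obtain ⟨a₂, ha₂, p₂, hp₂⟩ := hP.exists_adj_walk_avoiding hu hx₀P
  have ha₁S : a₁ ∉ thickening G r S := fun h => hy₀S (mem_thickening_succ_of_adj hG ha₁ h)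
  have ha₂S : a₂ ∈ thickening G r S := ⟨x₀, hx₀S, by rw [dist_eq_one_iff_adj.mpr ha₂]; omega⟩
  have hp : ∀ w ∈ (p₁.reverse.append p₂).support, w ∉ P := by
    simp only [Walk.mem_support_append_iff, Walk.support_reverse, List.mem_reverse]
    rintro w (hw | hw)
    exacts [hp₁ w hw, hp₂ w hw]
  obtain ⟨x, y, hxy, hyS, -, q, hqS, hqp⟩ := (p₁.reverse.append p₂).exists_boundary_prefix
    (S := (thickening G r S)ᶜ) ha₁S ⟨a₂, Walk.end_mem_support _, not_not.mpr ha₂S⟩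
  refine ⟨x, ⟨p₁.append q, fun w hw => ?_⟩, mem_thickening_succ_of_adj hG hxy.symm
    (not_not.mp hyS), a₁, ha₁, q.reverse, by simpa using hqS⟩
  rcases (Walk.mem_support_append_iff _ _).mp hw with hw | hw
  exacts [hp₁ w hw, hp w (hqp hw)]

theorem IsMinCutset.exists_pair_not_isCutset_thickening (hG : G.Connected)
    (hP : IsMinCutset G (S ∪ T) u v) (hu : u ∉ S ∪ T) (hv : v ∉ S ∪ T) (hS : S.Nonempty)
    (hT : T.Nonempty) (hST : ∀ s ∈ S, ∀ t ∈ T, 2 * r + 1 < G.dist s t)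
    (hTc : kConnectedSet G (2 * r + 1) T) (hr : 0 < r) :
    ∃ x y, IsCutset G (S ∪ T) x y ∧ ¬IsCutset G (thickening G r S) x y ∧
      ¬IsCutset G (thickening G r T) x y := by
  obtain ⟨s, hs⟩ := hS
  obtain ⟨t, ht⟩ := hT
  have hsT : s ∉ thickening G (r + 1) T := fun ⟨t', ht', hd⟩ => by
    have := hST s hs t' ht'
    omega
  obtain ⟨x, ⟨px, hpx⟩, hxT, a, ha, qx, hqx⟩ :=
    hP.exists_escape hG hu (Or.inr ht) ht (Or.inl hs) hsT hr
  obtain ⟨y, ⟨py, hpy⟩, hyT, b, hb, qy, hqy⟩ :=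
    hP.symm.exists_escape hG hv (Or.inr ht) ht (Or.inl hs) hsT hr
  refine ⟨x, y, hP.1.of_walks_avoiding px hpx py hpy, fun hc => ?_, fun hc => ?_⟩
  · -- a walk from `x` to `y` through the `(r + 1)`-thickening of `T`
    obtain ⟨t₁, ht₁, px', hpx'⟩ := exists_walk_support_subset_thickening hG hxT
    obtain ⟨t₂, ht₂, py', hpy'⟩ := exists_walk_support_subset_thickening hG hyT
    obtain ⟨c, hc'⟩ := hTc.exists_walk hG ht₁ ht₂
    obtain ⟨w, hw, hwS⟩ := hc (px'.append (c.append py'.reverse))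
    have hwT : w ∈ thickening G (r + 1) T := by
      simp only [Walk.mem_support_append_iff, Walk.support_reverse, List.mem_reverse] at hw
      rcases hw with hw | hw | hw
      exacts [hpx' w hw, thickening_mono (by omega) (hc' w hw), hpy' w hw]
    have := lt_dist_of_mem_thickening hG (k := 0)
      (fun s hs t ht => (hST s hs t ht).trans_le' (by omega)) hwS hwT
    simp at this
  · -- a walk from `x` to `y` through `s`
    obtain ⟨w, hw, hwT⟩ := hc (qx.append (Walk.cons ha (Walk.cons hb.symm qy.reverse)))
    simp only [Walk.mem_support_append_iff, Walk.support_cons, List.mem_cons,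
      Walk.support_reverse, List.mem_reverse] at hw
    rcases hw with hw | rfl | rfl | hw
    · exact hqx w hw hwT
    · exact hqx _ qx.end_mem_support hwT
    · exact hsT (thickening_mono (by omega) hwT)
    · exact hqy w hw hwT

end Separation

/-- Integer form of a quasi-isometry with quasi-inverse; the lower bounds are recovered from the
quasi-inverse in `CoarseEquiv.dist_le_dist_inv`. -/
structure CoarseEquiv {V W : Type} (a : ℕ) (G : SimpleGraph V) (H : SimpleGraph W)
    (φ : V → W) (ψ : W → V) : Prop where
  dist_map_le : ∀ x y, H.dist (φ x) (φ y) ≤ a * G.dist x y + a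
  dist_inv_le : ∀ w w', G.dist (ψ w) (ψ w') ≤ a * H.dist w w' + a
  dist_inv_map_le : ∀ x, G.dist (ψ (φ x)) x ≤ a
  dist_map_inv_le : ∀ w, H.dist (φ (ψ w)) w ≤ a

theorem le_ceil_mul_add_ceil {A : ℝ} {n m : ℕ} (h : (n : ℝ) ≤ A * m + A) :
    n ≤ ⌈A⌉₊ * m + ⌈A⌉₊ := by
  have hA := Nat.le_ceil A
  have : (n : ℝ) ≤ ⌈A⌉₊ * m + ⌈A⌉₊ := h.trans (by gcongr)
  exact_mod_cast this

theorem QuasiIsometric.exists_coarseEquiv {V W : Type} {A : ℝ} {G : SimpleGraph V}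
    {H : SimpleGraph W} (h : QuasiIsometric A G H) : ∃ φ ψ, CoarseEquiv ⌈A⌉₊ G H φ ψ := by
  obtain ⟨φ, ψ, hφ, hψ, hψφ, hφψ⟩ := h
  exact ⟨φ, ψ, fun x y => le_ceil_mul_add_ceil (hφ.1 x y).2,
    fun w w' => le_ceil_mul_add_ceil (hψ.1 w w').2,
    fun x => by exact_mod_cast (hψφ x).trans (Nat.le_ceil A),
    fun w => by exact_mod_cast (hφψ w).trans (Nat.le_ceil A)⟩

namespace CoarseEquiv

variable {V W : Type} {G : SimpleGraph V} {H : SimpleGraph W} {a : ℕ} {φ : V → W} {ψ : W → V}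

theorem symm (e : CoarseEquiv a G H φ ψ) : CoarseEquiv a H G ψ φ :=
  ⟨e.dist_inv_le, e.dist_map_le, e.dist_map_inv_le, e.dist_inv_map_le⟩

theorem dist_map_le_of_adj (e : CoarseEquiv a G H φ ψ) {x y : V} (h : G.Adj x y) :
    H.dist (φ x) (φ y) ≤ 2 * a := by
  have := e.dist_map_le x y
  rw [dist_eq_one_iff_adj.mpr h] at this
  omega

theorem dist_le_dist_inv (hH : H.Connected) (e : CoarseEquiv a G H φ ψ) (w w' : W) :
    H.dist w w' ≤ a * G.dist (ψ w) (ψ w') + 3 * a := by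
  have h₁ : H.dist w w' ≤ H.dist w (φ (ψ w)) + H.dist (φ (ψ w)) w' := hH.dist_triangle
  have h₂ : H.dist (φ (ψ w)) w' ≤ H.dist (φ (ψ w)) (φ (ψ w')) + H.dist (φ (ψ w')) w' :=
    hH.dist_triangle
  have h₃ : H.dist w (φ (ψ w)) ≤ a := by
    rw [dist_comm]
    exact e.dist_map_inv_le w
  have := e.dist_map_le (ψ w) (ψ w')
  have := e.dist_map_inv_le w'
  omega

variable {T T₁ T₂ : Set W} {x y : W}

theorem isCutset_thickening_image (hG : G.Connected) (hH : H.Connected)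
    (e : CoarseEquiv a G H φ ψ) (h : IsCutset H T x y) :
    IsCutset G (thickening G (a * (3 * a) + 2 * a) (ψ '' T)) (ψ x) (ψ y) := by
  have h₁ : IsCutset H (thickening H a T) (φ (ψ x)) (φ (ψ y)) :=
    h.thickening_of_dist_le hH (by rw [dist_comm]; exact e.dist_map_inv_le x)
      (e.dist_map_inv_le y)
  refine (h₁.comap hH fun _ _ => e.dist_map_le_of_adj).mono fun g hg => ?_
  obtain ⟨t, ht, hgt⟩ := thickening_thickening_subset hH hg
  refine ⟨ψ t, ⟨t, ht, rfl⟩, ?_⟩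
  have h₂ : G.dist g (ψ t) ≤ G.dist g (ψ (φ g)) + G.dist (ψ (φ g)) (ψ t) := hG.dist_triangle
  have h₃ := e.dist_inv_le (φ g) t
  have h₄ := e.dist_inv_map_le g
  have h₅ : a * H.dist (φ g) t ≤ a * (3 * a) := Nat.mul_le_mul_left a (by omega)
  rw [dist_comm] at h₄
  omega

theorem isCutset_of_isCutset_thickening_image (hG : G.Connected) (hH : H.Connected)
    (e : CoarseEquiv a G H φ ψ) {r : ℕ} (h : IsCutset G (thickening G r (ψ '' T)) (ψ x) (ψ y)) :
    IsCutset H (thickening H (a * (r + 2 * a) + 3 * a) T) x y := by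
  refine (h.comap hG fun _ _ => e.symm.dist_map_le_of_adj).mono fun w hw => ?_
  obtain ⟨_, ⟨t, ht, rfl⟩, hwt⟩ := thickening_thickening_subset hG hw
  have h₁ : a * G.dist (ψ w) (ψ t) ≤ a * (r + 2 * a) := Nat.mul_le_mul_left a (by omega)
  exact ⟨t, ht, (e.dist_le_dist_inv hH w t).trans (by omega)⟩

/-- Pulled back to `G`, the cutset `T₁ ∪ T₂` contains a minimal cutset, which
is `B`-connected and hence lies near only one of the two far apart parts. -/
theorem isCutset_thickening_or (hG : G.Connected) (hH : H.Connected) {B : ℕ}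
    (hB : cutConnLe G B) (e : CoarseEquiv a G H φ ψ) (h : IsCutset H (T₁ ∪ T₂) x y)
    (hT : ∀ t₁ ∈ T₁, ∀ t₂ ∈ T₂, a * (B + 2 * (a * (3 * a) + 2 * a)) + 3 * a < H.dist t₁ t₂) :
    IsCutset H (thickening H (a * (B + 2 * (a * (3 * a) + 2 * a)) + 3 * a) T₁) x y ∨
      IsCutset H (thickening H (a * (B + 2 * (a * (3 * a) + 2 * a)) + 3 * a) T₂) x y := by
  set μ := a * (3 * a) + 2 * a
  have hcut := e.isCutset_thickening_image hG hH h
  rw [Set.image_union, thickening_union] at hcut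
  obtain ⟨Ξ, hΞ, hmin⟩ := exists_isMinCutset_subset hcut
  have hsep : ∀ p ∈ thickening G μ (ψ '' T₁), ∀ q ∈ thickening G μ (ψ '' T₂), B < G.dist p q := by
    refine fun p hp q hq => lt_dist_of_mem_thickening hG ?_ hp hq
    rintro _ ⟨t₁, ht₁, rfl⟩ _ ⟨t₂, ht₂, rfl⟩
    by_contra! hle
    have := (e.dist_le_dist_inv hH t₁ t₂).trans (by gcongr : _ ≤ a * (μ + B + μ) + 3 * a)
    have := hT t₁ ht₁ t₂ ht₂
    linarith
  have hμ : a * (μ + 2 * a) + 3 * a ≤ a * (B + 2 * μ) + 3 * a :=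
    Nat.add_le_add_right (Nat.mul_le_mul_left a (by omega)) _
  rcases (hB _ _ Ξ hmin).subset_or_subset hΞ hsep with hΞT | hΞT
  · exact .inl ((e.isCutset_of_isCutset_thickening_image hG hH (hmin.1.mono hΞT)).mono
      (thickening_mono hμ))
  · exact .inr ((e.isCutset_of_isCutset_thickening_image hG hH (hmin.1.mono hΞT)).mono
      (thickening_mono hμ))

end CoarseEquiv

/-- Remark: `C < ∞` is a quasi-isometry invariant,
quantitatively; answers Question 2 of Babson–Benjamini.  For all `A, B ≥ 1`
there is `C = C(A,B)` such that if `G` and `H` are `A`-quasi-isometric graphs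
and `C(G) ≤ B`, then `C(H) ≤ C`. -/
theorem cutConn_quasiIsometry :
    ∀ A : ℝ, 1 ≤ A → ∀ B : ℕ, 1 ≤ B → ∃ C : ℕ,
      ∀ (V W : Type) (G : SimpleGraph V) (H : SimpleGraph W),
        Nonempty V → Nonempty W → G.Connected → H.Connected →
        (∀ v : V, (G.neighborSet v).Finite) →
        (∀ w : W, (H.neighborSet w).Finite) →
        QuasiIsometric A G H → cutConnLe G B → cutConnLe H C := by
  intro A hA B _
  set a := ⌈A⌉₊
  set D := a * (B + 2 * (a * (3 * a) + 2 * a)) + 3 * a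
  refine ⟨2 * D + 1, fun V W G H _ _ hG hH _ _ hGH hGB u v P hP => ?_⟩
  obtain ⟨φ, ψ, e⟩ := hGH.exists_coarseEquiv
  by_cases hu : u ∈ P
  · rw [hP.eq_singleton_left hu]
    exact kConnectedSet_singleton
  by_cases hv : v ∈ P
  · rw [hP.eq_singleton_right hv]
    exact kConnectedSet_singleton
  by_contra hPc
  obtain ⟨S₁, S₂, rfl, hS₁, hS₂, hgap, hS₂c⟩ := exists_split_of_not_kConnectedSet hH hPc
  have hD : 0 < D := by
    have : 0 < a := Nat.ceil_pos.mpr (by linarith)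
    positivity
  obtain ⟨x, y, hxy, h₁, h₂⟩ :=
    hP.exists_pair_not_isCutset_thickening hH hu hv hS₁ hS₂ hgap hS₂c hD
  have hgapD : ∀ t₁ ∈ S₁, ∀ t₂ ∈ S₂, D < H.dist t₁ t₂ := fun t₁ ht₁ t₂ ht₂ =>
    (hgap t₁ ht₁ t₂ ht₂).trans' (by omega)
  rcases e.isCutset_thickening_or hG hH hGB hxy hgapD with h | h
  exacts [h₁ h, h₂ h]

end PercPaper
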